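/- arXiv:1810.05628 — 6 statements merged into one kernel-verified Lean document; each statement's English description precedes it below -/
import Mathlib

section
/- Let F be a unitary operator on ℂ^m, i.e., a linear isometry equivalence F : EuclideanSpace ℂ (Fin m) ≃ₗᵢ[ℂ] EuclideanSpace ℂ (Fin m), let a : Fin m → ℝ satisfy 0 ≤ a j for all j, and let z ∈ EuclideanSpace ℂ (Fin m) satisfy (F z) j ≠ 0 for all j. Define w* = F.symm (fun j => (a j : ℂ) * ((F z) j / ‖(F z) j‖)). Then (i) ‖(F w*) j‖ = a j for all j, so w* lies in the modulus-constraint set M = {w | ∀ j, ‖(F w) j‖ = a j}; (ii) ‖w* - z‖² = ∑ j, (‖(F z) j‖ - a j)²; and (iii) for every w with ∀ j, ‖(F w) j‖ = a j, one has ‖w* - z‖ ≤ ‖w - z‖. In particular w* is a projection of z onto M, and the distance misfit ½ ‖w* - z‖² equals the amplitude Gaussian metric ½ ∑ j (‖(F z) j‖ - a j)². -/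
lemma euclid_norm_sq (m : ℕ) (x : EuclideanSpace ℂ (Fin m)) :
    ‖x‖ ^ 2 = ∑ j, ‖x j‖ ^ 2 := by
  rw [EuclideanSpace.norm_eq, Real.sq_sqrt]
  positivity

/-- The modulus projection `w* = F⁻¹(a ⊙ exp(i θ(F z)))` lies in the
modulus-constraint set `M = {w | ∀ j, ‖(F w) j‖ = a j}`, its squared distance to `z`
equals the amplitude Gaussian misfit `∑ j (‖(F z) j‖ - a j)²`, and it is the nearest
point of `M` to `z`. -/
theorem modulus_projection_is_nearest (m : ℕ)
    (F : EuclideanSpace ℂ (Fin m) ≃ₗᵢ[ℂ] EuclideanSpace ℂ (Fin m))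
    (a : Fin m → ℝ) (ha : ∀ j, 0 ≤ a j)
    (z : EuclideanSpace ℂ (Fin m)) (hz : ∀ j, F z j ≠ 0)
    (wstar : EuclideanSpace ℂ (Fin m))
    (hwstar : wstar = F.symm (WithLp.toLp 2 (fun j => (a j : ℂ) * (F z j / ‖F z j‖)) :
      EuclideanSpace ℂ (Fin m))) :
    (∀ j, ‖F wstar j‖ = a j) ∧
    ‖wstar - z‖ ^ 2 = ∑ j, (‖F z j‖ - a j) ^ 2 ∧
    ∀ w : EuclideanSpace ℂ (Fin m), (∀ j, ‖F w j‖ = a j) → ‖wstar - z‖ ≤ ‖w - z‖ := by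
  have key : ∀ j, F wstar j = (a j : ℂ) * (F z j / ‖F z j‖) := by
    intro j
    rw [hwstar, F.apply_symm_apply]
  have hnz : ∀ j, (‖F z j‖ : ℂ) ≠ 0 := fun j => by
    exact_mod_cast Complex.ofReal_ne_zero.mpr (norm_ne_zero_iff.mpr (hz j))
  have h1 : ∀ j, ‖F wstar j‖ = a j := by
    intro j
    rw [key j, norm_mul, norm_div, Complex.norm_real, Real.norm_eq_abs,
      abs_of_nonneg (ha j), Complex.norm_real, Real.norm_eq_abs, abs_norm,
      div_self (norm_ne_zero_iff.mpr (hz j)), mul_one]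
  have hdiff : ∀ j, ‖F wstar j - F z j‖ = |‖F z j‖ - a j| := by
    intro j
    have : F wstar j - F z j = ((a j : ℂ) - ‖F z j‖) * (F z j / ‖F z j‖) := by
      rw [key j, sub_mul]
      congr 1
      rw [mul_comm, div_mul_cancel₀ _ (hnz j)]
    rw [this, norm_mul, norm_div, Complex.norm_real, Real.norm_eq_abs, abs_norm,
      div_self (norm_ne_zero_iff.mpr (hz j)), mul_one]
    rw [show ((a j : ℂ) - ‖F z j‖) = ((a j - ‖F z j‖ : ℝ) : ℂ) by push_cast; ring,
      Complex.norm_real, Real.norm_eq_abs, abs_sub_comm]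
  have h2 : ‖wstar - z‖ ^ 2 = ∑ j, (‖F z j‖ - a j) ^ 2 := by
    have : ‖wstar - z‖ = ‖F wstar - F z‖ := by
      rw [← map_sub, F.norm_map]
    rw [this, euclid_norm_sq]
    refine Finset.sum_congr rfl fun j _ => ?_
    rw [show (F wstar - F z) j = F wstar j - F z j from rfl, hdiff j, sq_abs]
  refine ⟨h1, h2, fun w hw => ?_⟩
  have hsq : ‖wstar - z‖ ^ 2 ≤ ‖w - z‖ ^ 2 := by
    rw [h2, show ‖w - z‖ = ‖F w - F z‖ by rw [← map_sub, F.norm_map], euclid_norm_sq]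
    refine Finset.sum_le_sum fun j _ => ?_
    have h3 : |‖F z j‖ - a j| ≤ ‖F w j - F z j‖ := by
      rw [← hw j, abs_sub_comm]
      exact abs_norm_sub_norm_le _ _
    calc (‖F z j‖ - a j) ^ 2 = |‖F z j‖ - a j| ^ 2 := (sq_abs _).symm
      _ ≤ ‖F w j - F z j‖ ^ 2 := by
          exact pow_le_pow_left₀ (abs_nonneg _) h3 2
      _ = ‖(F w - F z) j‖ ^ 2 := rfl
  have := Real.sqrt_le_sqrt hsq
  rwa [Real.sqrt_sq (norm_nonneg _), Real.sqrt_sq (norm_nonneg _)] at this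
end

section
/- Let F be a unitary operator on ℂ^m, i.e., a linear isometry equivalence F : EuclideanSpace ℂ (Fin m) ≃ₗᵢ[ℂ] EuclideanSpace ℂ (Fin m), and let a : Fin m → ℝ satisfy 0 ≤ a j for all j. Then for every z ∈ EuclideanSpace ℂ (Fin m), the distance from z to the modulus-constraint set M = {w | ∀ j, ‖(F w) j‖ = a j} is given by Metric.infDist z M = Real.sqrt (∑ j, (‖(F z) j‖ - a j)²). (No nonvanishing assumption on F z is needed.) -/
/-- The distance from `z` to the modulus-constraint set
`M = {w | ∀ j, ‖(F w) j‖ = a j}` (for unitary `F` and nonnegative amplitudes `a`)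
is `√(∑ j (‖(F z) j‖ - a j)²)`. -/
theorem infDist_to_modulus_constraint_set (m : ℕ)
    (F : EuclideanSpace ℂ (Fin m) ≃ₗᵢ[ℂ] EuclideanSpace ℂ (Fin m))
    (a : Fin m → ℝ) (ha : ∀ j, 0 ≤ a j)
    (z : EuclideanSpace ℂ (Fin m)) :
    Metric.infDist z {w : EuclideanSpace ℂ (Fin m) | ∀ j, ‖F w j‖ = a j} =
      Real.sqrt (∑ j, (‖F z j‖ - a j) ^ 2) := by
  set u : EuclideanSpace ℂ (Fin m) := F z with hu
  set v : EuclideanSpace ℂ (Fin m) :=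
    WithLp.toLp 2 (fun j => if u j = 0 then (a j : ℂ) else ((a j / ‖u j‖ : ℝ) : ℂ) * u j) with hv
  have hvnorm : ∀ j, ‖v j‖ = a j := by
    intro j
    by_cases h : u j = 0
    · simp [hv, h, abs_of_nonneg (ha j)]
    · have h0 : ‖u j‖ ≠ 0 := norm_ne_zero_iff.mpr h
      show ‖if u j = 0 then (a j : ℂ) else ((a j / ‖u j‖ : ℝ) : ℂ) * u j‖ = a j
      rw [if_neg h, norm_mul, Complex.norm_real, Real.norm_eq_abs,
        abs_of_nonneg (div_nonneg (ha j) (norm_nonneg _)), div_mul_cancel₀ _ h0]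
  have hdiff : ∀ j, ‖u j - v j‖ = |‖u j‖ - a j| := by
    intro j
    by_cases h : u j = 0
    · simp [hv, h, abs_of_nonneg (ha j)]
    · have h0 : ‖u j‖ ≠ 0 := norm_ne_zero_iff.mpr h
      have heq : u j - v j = ((1 - a j / ‖u j‖ : ℝ) : ℂ) * u j := by
        show u j - (if u j = 0 then (a j : ℂ) else ((a j / ‖u j‖ : ℝ) : ℂ) * u j) = _
        rw [if_neg h]
        push_cast
        ring
      have key : (1 - a j / ‖u j‖) * ‖u j‖ = ‖u j‖ - a j := by
        rw [sub_mul, one_mul, div_mul_cancel₀ _ h0]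
      rw [heq, norm_mul, Complex.norm_real, Real.norm_eq_abs]
      calc |1 - a j / ‖u j‖| * ‖u j‖
          = |(1 - a j / ‖u j‖) * ‖u j‖| := by
            rw [abs_mul, abs_of_nonneg (norm_nonneg (u j))]
        _ = |‖u j‖ - a j| := by rw [key]
  set w₀ : EuclideanSpace ℂ (Fin m) := F.symm v with hw₀
  have hw₀mem : w₀ ∈ {w : EuclideanSpace ℂ (Fin m) | ∀ j, ‖F w j‖ = a j} := by
    intro j
    simp [hw₀, hvnorm j]
  have hdistF : ∀ w : EuclideanSpace ℂ (Fin m), dist z w = dist u (F w) := by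
    intro w
    rw [hu, F.dist_map]
  have hdw₀ : dist z w₀ = Real.sqrt (∑ j, (‖u j‖ - a j) ^ 2) := by
    rw [hdistF, hw₀, F.apply_symm_apply, EuclideanSpace.dist_eq]
    congr 1
    apply Finset.sum_congr rfl
    intro j _
    rw [dist_eq_norm, hdiff j, sq_abs]
  have hlb : ∀ w ∈ {w : EuclideanSpace ℂ (Fin m) | ∀ j, ‖F w j‖ = a j},
      Real.sqrt (∑ j, (‖u j‖ - a j) ^ 2) ≤ dist z w := by
    intro w hw
    rw [hdistF, EuclideanSpace.dist_eq]
    apply Real.sqrt_le_sqrt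
    apply Finset.sum_le_sum
    intro j _
    have h1 : |‖u j‖ - a j| ≤ dist (u j) (F w j) := by
      rw [← hw j, dist_eq_norm]
      exact abs_norm_sub_norm_le _ _
    calc (‖u j‖ - a j) ^ 2 = |‖u j‖ - a j| ^ 2 := (sq_abs _).symm
      _ ≤ dist (u j) (F w j) ^ 2 := pow_le_pow_left₀ (abs_nonneg _) h1 2
  apply le_antisymm
  · calc Metric.infDist z {w : EuclideanSpace ℂ (Fin m) | ∀ j, ‖F w j‖ = a j}
        ≤ dist z w₀ := Metric.infDist_le_dist_of_mem hw₀mem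
      _ = _ := hdw₀
  · by_contra hlt
    push_neg at hlt
    obtain ⟨w, hwmem, hwd⟩ := (Metric.infDist_lt_iff ⟨w₀, hw₀mem⟩).mp hlt
    exact absurd (hlb w hwmem) (not_le.mpr hwd)
end

section
/- Let A_k : EuclideanSpace ℂ (Fin n) →L[ℂ] EuclideanSpace ℂ (Fin m), k = 1, …, N, be continuous ℂ-linear maps (modeling z ↦ F(Q_k z) for the k-th probe) and let d_k : Fin m → ℝ be given data. Define the intensity Gaussian error metric Φ_IG(z) = ½ ∑_{k=1}^N ∑_j (‖(A_k z) j‖² - d_k j)². Then Φ_IG is differentiable at every z when EuclideanSpace ℂ (Fin n) is regarded as a real inner product space, and its gradient is ∇Φ_IG(z) = ∑_{k=1}^N A_k† (fun j => (2 (‖(A_k z) j‖² - d_k j) : ℝ) • (A_k z) j), where A_k† is the complex adjoint of A_k; equivalently, DΦ_IG(z)[v] = Re ⟪∇Φ_IG(z), v⟫ for all v. -/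
/-- Wirtinger gradient of the intensity Gaussian error metric
`Φ_IG(z) = ½ ∑ₖ ∑ⱼ (‖(Aₖ z)ⱼ‖² - dₖⱼ)²`: regarding `ℂⁿ` as a real inner product
space, `Φ_IG` is differentiable at every `z` with derivative
`v ↦ Re ⟪∑ₖ Aₖ† ((2(|Aₖz|² - dₖ)) ⊙ Aₖ z), v⟫`. -/
theorem hasFDerivAt_intensity_gaussian_metric (n m N : ℕ)
    (A : Fin N → (EuclideanSpace ℂ (Fin n) →L[ℂ] EuclideanSpace ℂ (Fin m)))
    (d : Fin N → Fin m → ℝ) (z : EuclideanSpace ℂ (Fin n)) :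
    HasFDerivAt
      (fun w : EuclideanSpace ℂ (Fin n) =>
        (1 / 2 : ℝ) * ∑ k, ∑ j, (‖A k w j‖ ^ 2 - d k j) ^ 2)
      (Complex.reCLM.comp
        ((innerSL ℂ (∑ k, ContinuousLinearMap.adjoint (A k)
          (WithLp.toLp 2 (fun j => (2 * (‖A k z j‖ ^ 2 - d k j)) • A k z j) :
            EuclideanSpace ℂ (Fin m)))).restrictScalars ℝ))
      z := by
  have key : ∀ (k : Fin N) (j : Fin m),
      HasFDerivAt (fun w : EuclideanSpace ℂ (Fin n) => (‖A k w j‖ ^ 2 - d k j) ^ 2)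
        ((2 * (‖A k z j‖ ^ 2 - d k j)) •
          (2 • (innerSL ℝ ((((EuclideanSpace.proj j).comp (A k)).restrictScalars ℝ) z)).comp
            (((EuclideanSpace.proj j : _ →L[ℂ] ℂ).comp (A k)).restrictScalars ℝ))) z := by
    intro k j
    have hB := (((EuclideanSpace.proj j : _ →L[ℂ] ℂ).comp (A k)).restrictScalars ℝ).hasFDerivAt
      (x := z)
    have h := hB.norm_sq.sub_const (d k j)
    refine HasFDerivAt.congr_of_eventuallyEq ((h.mul h).congr_fderiv ?_)
      (by filter_upwards with w; rw [pow_two]; rfl)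
    rw [two_mul, add_smul]; rfl
  have hsum : HasFDerivAt
      (fun w : EuclideanSpace ℂ (Fin n) => ∑ k, ∑ j, (‖A k w j‖ ^ 2 - d k j) ^ 2)
      (∑ k, ∑ j, (2 * (‖A k z j‖ ^ 2 - d k j)) •
          (2 • (innerSL ℝ ((((EuclideanSpace.proj j).comp (A k)).restrictScalars ℝ) z)).comp
            (((EuclideanSpace.proj j : _ →L[ℂ] ℂ).comp (A k)).restrictScalars ℝ))) z :=
    HasFDerivAt.fun_sum fun k _ => HasFDerivAt.fun_sum fun j _ => key k j
  refine (hsum.const_mul (1 / 2 : ℝ)).congr_fderiv ?_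
  ext v
  simp [ContinuousLinearMap.sum_apply, inner_sum, sum_inner,
    ContinuousLinearMap.adjoint_inner_left, PiLp.inner_apply, Finset.mul_sum,
    real_inner_eq_re_inner (𝕜 := ℂ), 
    Finset.sum_div, Complex.re_sum, ← Complex.ofReal_pow]

  refine Finset.sum_congr rfl fun k _ => Finset.sum_congr rfl fun j _ => ?_
  ring
end

section
/- Let A : EuclideanSpace ℂ (Fin n) →L[ℂ] EuclideanSpace ℂ (Fin m) be a continuous ℂ-linear map, let a : Fin m → ℝ, and let z ∈ EuclideanSpace ℂ (Fin n) satisfy (A z) j ≠ 0 for all j. Define the amplitude misfit Φ(w) = ½ ∑_j (‖(A w) j‖ - a j)². Then Φ is differentiable at z when EuclideanSpace ℂ (Fin n) is regarded as a real inner product space, and its gradient is ∇Φ(z) = A† (fun j => (A z) j - (a j : ℂ) * ((A z) j / ‖(A z) j‖)), where A† is the complex adjoint of A; equivalently, DΦ(z)[v] = Re ⟪∇Φ(z), v⟫ for all v. -/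
open Complex ContinuousLinearMap

lemma hasFDerivAt_norm_complex (c : ℂ) (hc : c ≠ 0) :
    HasFDerivAt (fun x : ℂ => ‖x‖) (‖c‖⁻¹ • innerSL ℝ c) c := by
  have h1 : HasFDerivAt (fun x : ℂ => ‖x‖ ^ 2) ((2:ℕ) • innerSL ℝ c) c :=
    (hasStrictFDerivAt_norm_sq c).hasFDerivAt
  have h2 : (‖c‖:ℝ)^2 ≠ 0 := pow_ne_zero 2 (norm_ne_zero_iff.2 hc)
  have h3 := (Real.hasDerivAt_sqrt h2).comp_hasFDerivAt c h1
  have he : ((fun x => Real.sqrt x) ∘ fun x : ℂ => ‖x‖ ^ 2) = fun x : ℂ => ‖x‖ := by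
    funext x; simp [Function.comp, Real.sqrt_sq (norm_nonneg x)]
  rw [he] at h3
  have hn : ‖c‖ ≠ 0 := norm_ne_zero_iff.2 hc
  have hs : (1 / (2 * Real.sqrt (‖c‖ ^ 2))) • ((2:ℕ) • innerSL ℝ c)
      = ‖c‖⁻¹ • innerSL ℝ c := by
    rw [Real.sqrt_sq (norm_nonneg c)]
    ext w
    simp only [ContinuousLinearMap.smul_apply, smul_eq_mul, nsmul_eq_mul, Nat.cast_ofNat]
    field_simp
  rwa [hs] at h3



/-- Wirtinger gradient of the amplitude misfit `Φ(w) = ½ ∑ⱼ (‖(A w)ⱼ‖ - aⱼ)²`: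
regarding `ℂⁿ` as a real inner product space, `Φ` is differentiable at any `z`
with `(A z)ⱼ ≠ 0` for all `j`, with derivative
`v ↦ Re ⟪A† (A z - a ⊙ exp(i θ(A z))), v⟫`. -/
theorem hasFDerivAt_amplitude_misfit (n m : ℕ)
    (A : EuclideanSpace ℂ (Fin n) →L[ℂ] EuclideanSpace ℂ (Fin m))
    (a : Fin m → ℝ) (z : EuclideanSpace ℂ (Fin n)) (hz : ∀ j, A z j ≠ 0) :
    HasFDerivAt
      (fun w : EuclideanSpace ℂ (Fin n) =>
        (1 / 2 : ℝ) * ∑ j, (‖A w j‖ - a j) ^ 2)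
      (Complex.reCLM.comp
        ((innerSL ℂ (ContinuousLinearMap.adjoint A
          (WithLp.toLp 2 (fun j => A z j - (a j : ℂ) * (A z j / ‖A z j‖)) :
            EuclideanSpace ℂ (Fin m)))).restrictScalars ℝ))
      z := by
  set g : EuclideanSpace ℂ (Fin m) :=
    WithLp.toLp 2 (fun j => A z j - (a j : ℂ) * (A z j / ‖A z j‖)) with hg
  set B : Fin m → (EuclideanSpace ℂ (Fin n) →L[ℝ] ℂ) :=
    fun j => ((EuclideanSpace.proj j).comp A).restrictScalars ℝ with hB
  have hBfd : ∀ j, HasFDerivAt (fun w : EuclideanSpace ℂ (Fin n) => A w j) (B j) z :=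
    fun j => (B j).hasFDerivAt
  have hnorm : ∀ j, HasFDerivAt (fun w : EuclideanSpace ℂ (Fin n) => ‖A w j‖)
      ((‖A z j‖⁻¹ • innerSL ℝ (A z j)).comp (B j)) z :=
    fun j => (hasFDerivAt_norm_complex (A z j) (hz j)).comp z (hBfd j)
  have hsq : ∀ j, HasFDerivAt (fun w : EuclideanSpace ℂ (Fin n) => (‖A w j‖ - a j) ^ 2)
      ((2 * (‖A z j‖ - a j)) • ((‖A z j‖⁻¹ • innerSL ℝ (A z j)).comp (B j))) z := by
    intro j
    have h := ((hnorm j).sub_const (a j)).mul ((hnorm j).sub_const (a j))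
    have he : (2 * (‖A z j‖ - a j)) • ((‖A z j‖⁻¹ • innerSL ℝ (A z j)).comp (B j))
        = (‖A z j‖ - a j) • ((‖A z j‖⁻¹ • innerSL ℝ (A z j)).comp (B j))
          + (‖A z j‖ - a j) • ((‖A z j‖⁻¹ • innerSL ℝ (A z j)).comp (B j)) := by
      rw [two_mul, add_smul]
    rw [he]
    simp only [pow_two]
    exact h
  have hsum := HasFDerivAt.sum (fun j (_ : j ∈ Finset.univ) => hsq j)
  have hmul := hsum.const_mul (1/2 : ℝ)
  convert hmul using 1
  any_goals rfl
  · funext w; simp [Finset.sum_apply]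
  ext v
  simp only [ContinuousLinearMap.comp_apply, ContinuousLinearMap.coe_restrictScalars',
    ContinuousLinearMap.smul_apply, ContinuousLinearMap.coe_sum', Finset.sum_apply,
    Complex.reCLM_apply, innerSL_apply_apply, smul_eq_mul]
  rw [ContinuousLinearMap.adjoint_inner_left]
  rw [PiLp.inner_apply]
  simp only [RCLike.inner_apply, map_sum, Complex.re_sum]
  rw [Finset.mul_sum]
  refine Finset.sum_congr rfl fun j _ => ?_
  have hc : A z j ≠ 0 := hz j
  have hr : ‖A z j‖ ≠ 0 := norm_ne_zero_iff.2 hc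
  have hrc : (‖A z j‖ : ℂ) ≠ 0 := by exact_mod_cast hr
  have hgj : g j = ((1 - a j / ‖A z j‖ : ℝ) : ℂ) * A z j := by
    rw [hg]
    push_cast
    field_simp
  rw [hgj]
  rw [map_mul, Complex.conj_ofReal, mul_left_comm, Complex.re_ofReal_mul]
  rw [Complex.inner, show (B j) v = A v j from rfl]
  have hr' : ‖A z j‖ ≠ 0 := hr
  field_simp
end

section
/- Let F be a unitary operator on ℂ^n (a linear isometry equivalence F : EuclideanSpace ℂ (Fin n) ≃ₗᵢ[ℂ] EuclideanSpace ℂ (Fin n)), let Q_k : EuclideanSpace ℂ (Fin n) →L[ℂ] EuclideanSpace ℂ (Fin n), k = 1, …, N, be continuous ℂ-linear maps, and let a_k : Fin n → ℝ satisfy 0 ≤ a_k j. For each k define P_k(z) = F.symm (fun j => (a_k j : ℂ) * ((F (Q_k z)) j / ‖(F (Q_k z)) j‖)) and the distance error metric Φ_M(z) = ½ ∑_{k=1}^N ‖P_k(z) - Q_k z‖². If z is such that (F (Q_k z)) j ≠ 0 for all k and all j, then Φ_M is differentiable at z when EuclideanSpace ℂ (Fin n) is regarded as a real inner product space, and its gradient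 is ∇Φ_M(z) = ∑_{k=1}^N Q_k† (Q_k z - P_k(z)), where Q_k† is the complex adjoint of Q_k. -/
open scoped InnerProductSpace ComplexConjugate

set_option maxHeartbeats 1000000

lemma hasFDerivAt_norm_complex_s8 {G : Type*} [NormedAddCommGroup G] [NormedSpace ℝ G]
    {f : G → ℂ} {f' : G →L[ℝ] ℂ} {x : G} (hf : HasFDerivAt f f' x) (h0 : f x ≠ 0) :
    HasFDerivAt (fun w => ‖f w‖) ((‖f x‖)⁻¹ • ((innerSL ℝ (f x)).comp f')) x := by
  have hn : ‖f x‖ ≠ 0 := norm_ne_zero_iff.2 h0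
  have h1 : HasFDerivAt (fun w => ‖f w‖ ^ 2) (2 • (innerSL ℝ (f x)).comp f') x := hf.norm_sq
  have h2 : HasDerivAt Real.sqrt (1 / (2 * Real.sqrt (‖f x‖ ^ 2))) (‖f x‖ ^ 2) :=
    Real.hasDerivAt_sqrt (pow_ne_zero 2 hn)
  have h3 := h2.comp_hasFDerivAt x h1
  have h4 : (fun w => Real.sqrt (‖f w‖ ^ 2)) = fun w => ‖f w‖ :=
    funext fun w => Real.sqrt_sq (norm_nonneg _)
  rw [show (Real.sqrt ∘ fun w => ‖f w‖ ^ 2) = fun w => ‖f w‖ from h4] at h3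
  refine h3.congr_fderiv ?_
  rw [Real.sqrt_sq (norm_nonneg _)]
  ext v
  simp [ContinuousLinearMap.smul_apply, two_smul]
  field_simp
  ring

lemma norm_sub_sq_scalar (a : ℝ) (c : ℂ) (hc : c ≠ 0) :
    ‖(a:ℂ) * (c/‖c‖) - c‖^2 = (a - ‖c‖)^2 := by
  have hn : (‖c‖ : ℝ) ≠ 0 := norm_ne_zero_iff.2 hc
  have hn' : ((‖c‖ : ℝ) : ℂ) ≠ 0 := by exact_mod_cast hn
  have h : (a:ℂ) * (c/‖c‖) - c = (((a - ‖c‖)/‖c‖ : ℝ):ℂ) * c := by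
    rw [Complex.ofReal_div, Complex.ofReal_sub]
    field_simp [hn']
  rw [h, norm_mul, Complex.norm_real, Real.norm_eq_abs, mul_pow, sq_abs, div_pow]
  rw [div_mul_cancel₀ _ (pow_ne_zero 2 hn)]

lemma key2 (a : ℝ) (c t : ℂ) (hc : c ≠ 0) :
    (‖c‖ - a) * ((‖c‖)⁻¹ * (conj c * t).re) = (conj (c - (a:ℂ) * (c/‖c‖)) * t).re := by
  have hn : (‖c‖ : ℝ) ≠ 0 := norm_ne_zero_iff.2 hc
  have hn' : ((‖c‖ : ℝ) : ℂ) ≠ 0 := by exact_mod_cast hn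
  have h : c - (a:ℂ)*(c/‖c‖) = (((‖c‖ - a)/‖c‖ : ℝ):ℂ) * c := by
    rw [Complex.ofReal_div, Complex.ofReal_sub]
    field_simp [hn']
  rw [h, map_mul, Complex.conj_ofReal, mul_assoc, Complex.re_ofReal_mul, div_mul_eq_mul_div,
    mul_div_assoc]
  rw [show (conj c * t).re / ‖c‖ = (‖c‖)⁻¹ * (conj c * t).re by rw [div_eq_inv_mul]]

/-- The modulus-constraint projection of the `k`-th probe:
`P(z) = F⁻¹(a ⊙ exp(i θ(F(Q z))))`. -/
noncomputable def modulusProj {n : ℕ}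
    (F : EuclideanSpace ℂ (Fin n) ≃ₗᵢ[ℂ] EuclideanSpace ℂ (Fin n))
    (Q : EuclideanSpace ℂ (Fin n) →L[ℂ] EuclideanSpace ℂ (Fin n))
    (a : Fin n → ℝ) (z : EuclideanSpace ℂ (Fin n)) : EuclideanSpace ℂ (Fin n) :=
  F.symm (WithLp.toLp 2 (fun j => (a j : ℂ) * (F (Q z) j / ‖F (Q z) j‖)) : EuclideanSpace ℂ (Fin n))

/-- Gradient of the distance error metric `Φ_M(z) = ½ ∑ₖ ‖Pₖ(z) - Qₖ z‖²`:
regarding `ℂⁿ` as a real inner product space, `Φ_M` is differentiable at any `z`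
with `(F(Qₖ z))ⱼ ≠ 0` for all `k, j`, with derivative
`v ↦ Re ⟪∑ₖ Qₖ† (Qₖ z - Pₖ(z)), v⟫`. -/
theorem hasFDerivAt_distance_metric (n N : ℕ)
    (F : EuclideanSpace ℂ (Fin n) ≃ₗᵢ[ℂ] EuclideanSpace ℂ (Fin n))
    (Q : Fin N → (EuclideanSpace ℂ (Fin n) →L[ℂ] EuclideanSpace ℂ (Fin n)))
    (a : Fin N → Fin n → ℝ) (ha : ∀ k j, 0 ≤ a k j)
    (z : EuclideanSpace ℂ (Fin n)) (hz : ∀ k j, F (Q k z) j ≠ 0) :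
    HasFDerivAt
      (fun w : EuclideanSpace ℂ (Fin n) =>
        (1 / 2 : ℝ) * ∑ k, ‖modulusProj F (Q k) (a k) w - Q k w‖ ^ 2)
      (Complex.reCLM.comp
        ((innerSL ℂ (∑ k, ContinuousLinearMap.adjoint (Q k)
          (Q k z - modulusProj F (Q k) (a k) z))).restrictScalars ℝ))
      z := by
  classical
  have hL : ∀ k j (w : EuclideanSpace ℂ (Fin n)),
      ((EuclideanSpace.proj j).comp
        (F.toLinearIsometry.toContinuousLinearMap.comp (Q k))) w = F (Q k w) j := by
    intro k j w; simp
  -- per-coordinate derivative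
  have hpiece : ∀ k j, HasFDerivAt
      (fun w : EuclideanSpace ℂ (Fin n) => (1 / 2 : ℝ) * (a k j - ‖F (Q k w) j‖) ^ 2)
      ((‖F (Q k z) j‖ - a k j) • ((‖F (Q k z) j‖)⁻¹ • ((innerSL ℝ (F (Q k z) j)).comp
        ((((EuclideanSpace.proj j).comp
          (F.toLinearIsometry.toContinuousLinearMap.comp (Q k)))).restrictScalars ℝ)))) z := by
    intro k j
    have hf0 : HasFDerivAt (fun w : EuclideanSpace ℂ (Fin n) => F (Q k w) j)
        ((((EuclideanSpace.proj j).comp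
          (F.toLinearIsometry.toContinuousLinearMap.comp (Q k)))).restrictScalars ℝ) z := by
      have h := ((((EuclideanSpace.proj j).comp
          (F.toLinearIsometry.toContinuousLinearMap.comp (Q k)))).restrictScalars ℝ).hasFDerivAt
          (x := z)
      exact h.congr_of_eventuallyEq (Filter.Eventually.of_forall fun w => (hL k j w).symm)
    have hnorm := hasFDerivAt_norm_complex_s8 hf0 (hz k j)
    have houter : HasDerivAt (fun t : ℝ => (1 / 2 : ℝ) * (a k j - t) ^ 2)
        (‖F (Q k z) j‖ - a k j) ‖F (Q k z) j‖ := by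
      have h := (((hasDerivAt_id ‖F (Q k z) j‖).const_sub (a k j)).pow 2).const_mul (1/2 : ℝ)
      refine h.congr_deriv ?_
      simp only [id_eq]
      push_cast
      ring
    have := houter.comp_hasFDerivAt z hnorm
    exact this
  have hsum := HasFDerivAt.fun_sum (fun k (_ : k ∈ Finset.univ) =>
    HasFDerivAt.fun_sum (fun j (_ : j ∈ Finset.univ) => hpiece k j))
  -- eventual equality
  have hev : (fun w : EuclideanSpace ℂ (Fin n) =>
        (1 / 2 : ℝ) * ∑ k, ‖modulusProj F (Q k) (a k) w - Q k w‖ ^ 2)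
      =ᶠ[nhds z] (fun w : EuclideanSpace ℂ (Fin n) =>
        ∑ k, ∑ j, (1 / 2 : ℝ) * (a k j - ‖F (Q k w) j‖) ^ 2) := by
    have h1 : ∀ᶠ w in nhds z, ∀ k j, F (Q k w) j ≠ 0 := by
      rw [Filter.eventually_all]
      intro k
      rw [Filter.eventually_all]
      intro j
      have hc : Continuous fun w : EuclideanSpace ℂ (Fin n) => F (Q k w) j :=
        (continuous_congr (hL k j)).mp ((((EuclideanSpace.proj j).comp
          (F.toLinearIsometry.toContinuousLinearMap.comp (Q k)))).continuous)
      exact hc.continuousAt.eventually_ne (hz k j)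
    refine h1.mono fun w hw => ?_
    dsimp only
    rw [Finset.mul_sum]
    refine Finset.sum_congr rfl fun k _ => ?_
    set g : EuclideanSpace ℂ (Fin n) :=
      WithLp.toLp 2 (fun j => (a k j : ℂ) * (F (Q k w) j / ‖F (Q k w) j‖)) with hg
    have hP : modulusProj F (Q k) (a k) w - Q k w = F.symm (g - F (Q k w)) := by
      conv_lhs => rw [show (Q k) w = F.symm (F (Q k w)) from (F.symm_apply_apply _).symm]
      rw [modulusProj, ← map_sub, hg]
    rw [hP, LinearIsometryEquiv.norm_map, EuclideanSpace.norm_eq,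
      Real.sq_sqrt (Finset.sum_nonneg fun j _ => by positivity), Finset.mul_sum]
    refine Finset.sum_congr rfl fun j _ => ?_
    congr 1
    rw [PiLp.sub_apply, hg]
    exact norm_sub_sq_scalar (a k j) _ (hw k j)
  -- identification of the derivative
  have hD : (∑ k, ∑ j, ((‖F (Q k z) j‖ - a k j) • ((‖F (Q k z) j‖)⁻¹ •
        ((innerSL ℝ (F (Q k z) j)).comp
        ((((EuclideanSpace.proj j).comp
          (F.toLinearIsometry.toContinuousLinearMap.comp (Q k)))).restrictScalars ℝ)))))
      = (Complex.reCLM.comp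
        ((innerSL ℂ (∑ k, ContinuousLinearMap.adjoint (Q k)
          (Q k z - modulusProj F (Q k) (a k) z))).restrictScalars ℝ)) := by
    refine ContinuousLinearMap.ext fun v => ?_
    simp only [ContinuousLinearMap.sum_apply, ContinuousLinearMap.smul_apply,
      ContinuousLinearMap.coe_comp', Function.comp_apply,
      ContinuousLinearMap.coe_restrictScalars', Complex.reCLM_apply, innerSL_apply_apply]
    rw [sum_inner, Complex.re_sum]
    refine Finset.sum_congr rfl fun k _ => ?_
    rw [ContinuousLinearMap.adjoint_inner_left, ← F.inner_map_map, map_sub, modulusProj,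
      F.apply_symm_apply, PiLp.inner_apply, Complex.re_sum]
    refine Finset.sum_congr rfl fun j _ => ?_
    rw [PiLp.sub_apply, RCLike.inner_apply]
    have hLv : (EuclideanSpace.proj j) (F.toLinearIsometry.toContinuousLinearMap ((Q k) v))
        = F (Q k v) j := by simp
    rw [hLv, Complex.inner, smul_eq_mul, smul_eq_mul]
    rw [mul_comm (F (Q k v) j), mul_comm (F (Q k v) j)]
    exact key2 (a k j) (F (Q k z) j) (F (Q k v) j) (hz k j)
  rw [hD] at hsum
  exact hsum.congr_of_eventuallyEq hev
end

section
/- Let F be a unitary operator on ℂ^n (a linear isometry equivalence of EuclideanSpace ℂ (Fin n)), let Q : EuclideanSpace ℂ (Fin n) →L[ℂ] EuclideanSpace ℂ (Fin n) be a continuous ℂ-linear map that is self-adjoint and idempotent (Q† = Q and Q ∘ Q = Q, modeling a binary diagonal illumination matrix), and let a : Fin n → ℝ with 0 ≤ a j. Define P(z) = F.symm (fun j => (a j : ℂ) * ((F (Q z)) j / ‖(F (Q z)) j‖)) and Φ(z) = ½ ‖P(z) - Q z‖². If z satisfies (F (Q z)) j ≠ 0 for all j, then the PIE inner update with relaxation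 parameter γ = 0, namely z⁺ = z + Q (P(z) - Q z), coincides with one steepest descent step of unit stepsize on Φ: z⁺ = z - ∇Φ(z), where ∇Φ(z) is the gradient of Φ at z when EuclideanSpace ℂ (Fin n) is regarded as a real inner product space. -/
open scoped ComplexConjugate

private theorem hasFDerivAt_cnorm (c : ℂ) (hc : c ≠ 0) :
    HasFDerivAt (fun x : ℂ => ‖x‖) (‖c‖⁻¹ • (innerSL ℝ c)) c := by
  have h2 : HasFDerivAt (fun x : ℂ => ‖x‖ ^ 2) (2 • (innerSL ℝ c)) c :=
    (hasStrictFDerivAt_norm_sq c).hasFDerivAt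
  have hpos : (0:ℝ) < ‖c‖ ^ 2 := pow_pos (norm_pos_iff.mpr hc) 2
  have hs : HasDerivAt Real.sqrt (1 / (2 * Real.sqrt (‖c‖^2))) (‖c‖^2) :=
    (Real.hasStrictDerivAt_sqrt hpos.ne').hasDerivAt
  have key := hs.comp_hasFDerivAt c h2
  have heq : (Real.sqrt ∘ fun x : ℂ => ‖x‖ ^ 2) = fun x : ℂ => ‖x‖ := by
    funext x; simp [Function.comp, Real.sqrt_sq (norm_nonneg x)]
  rw [heq] at key
  refine key.congr_fderiv ?_
  rw [Real.sqrt_sq (norm_nonneg c)]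
  ext v
  have hn : ‖c‖ ≠ 0 := norm_ne_zero_iff.mpr hc
  simp [smul_smul]
  field_simp

private theorem comp_norm_id (aj : ℝ) (c : ℂ) (hc : c ≠ 0) :
    ‖(aj:ℂ) * (c / ‖c‖) - c‖ ^ 2 = (‖c‖ - aj) ^ 2 := by
  have hn : (‖c‖:ℝ) ≠ 0 := norm_ne_zero_iff.mpr hc
  have hcc : (‖c‖:ℂ) ≠ 0 := Complex.ofReal_ne_zero.mpr hn
  have h : (aj:ℂ) * (c / ‖c‖) - c = (((aj - ‖c‖ : ℝ)):ℂ) * (c / ‖c‖) := by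
    have h2 : (‖c‖:ℂ) * (c / ‖c‖) = c := by
      rw [mul_div_assoc', mul_comm, mul_div_assoc, div_self hcc, mul_one]
    push_cast
    rw [sub_mul, h2]
  rw [h, norm_mul, norm_div, Complex.norm_real, Complex.norm_real,
    norm_norm, div_self hn, mul_one, Real.norm_eq_abs, sq_abs]
  ring

/-- For a binary (self-adjoint, idempotent) probe `Q` and unitary `F`, the PIE
inner update with `γ = 0`, namely `z⁺ = z + Q(P(z) - Q z)`, coincides with one
unit-stepsize steepest descent step `z⁺ = z - ∇Φ(z)` on
`Φ(z) = ½ ‖P(z) - Q z‖²`, where the gradient is taken regarding `ℂⁿ` as a real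
inner product space (i.e. `DΦ(z)[v] = Re ⟪∇Φ(z), v⟫` for all `v`). -/
theorem pie_update_is_steepest_descent (n : ℕ)
    (F : EuclideanSpace ℂ (Fin n) ≃ₗᵢ[ℂ] EuclideanSpace ℂ (Fin n))
    (Q : EuclideanSpace ℂ (Fin n) →L[ℂ] EuclideanSpace ℂ (Fin n))
    (hQsa : ContinuousLinearMap.adjoint Q = Q) (hQidem : Q.comp Q = Q)
    (a : Fin n → ℝ) (ha : ∀ j, 0 ≤ a j)
    (z : EuclideanSpace ℂ (Fin n)) (hz : ∀ j, F (Q z) j ≠ 0) :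
    ∃ g : EuclideanSpace ℂ (Fin n),
      HasFDerivAt
        (fun w : EuclideanSpace ℂ (Fin n) =>
          (1 / 2 : ℝ) * ‖modulusProj F Q a w - Q w‖ ^ 2)
        (Complex.reCLM.comp ((innerSL ℂ g).restrictScalars ℝ)) z ∧
      z + Q (modulusProj F Q a z - Q z) = z - g := by
  classical
  set P : EuclideanSpace ℂ (Fin n) → EuclideanSpace ℂ (Fin n) := modulusProj F Q a with hP
  set g : EuclideanSpace ℂ (Fin n) := Q ((Q z) - P z) with hgdef
  refine ⟨g, ?_, ?_⟩
  · -- the derivative claim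
    set c : Fin n → ℂ := fun j => F (Q z) j with hc
    -- the linear maps
    set Tc : Fin n → (EuclideanSpace ℂ (Fin n) →L[ℂ] ℂ) := fun j =>
      (EuclideanSpace.proj j).comp
        ((F.toContinuousLinearEquiv.toContinuousLinearMap).comp Q) with hTc
    set T : Fin n → (EuclideanSpace ℂ (Fin n) →L[ℝ] ℂ) := fun j =>
      (Tc j).restrictScalars ℝ with hT
    have hTapp : ∀ j v, T j v = F (Q v) j := by intro j v; simp [hT, hTc]
    have hTd : ∀ j, HasFDerivAt (fun w => F (Q w) j) (T j) z := fun j =>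
      (T j).hasFDerivAt
    -- derivative of each summand
    have hsummand : ∀ j, HasFDerivAt
        (fun w => (1/2 : ℝ) * (‖F (Q w) j‖ - a j)^2)
        ((‖c j‖ - a j) • ((‖c j‖⁻¹ • innerSL ℝ (c j)).comp (T j))) z := by
      intro j
      have hnorm : HasFDerivAt (fun w => ‖F (Q w) j‖)
          ((‖c j‖⁻¹ • innerSL ℝ (c j)).comp (T j)) z :=
        (hasFDerivAt_cnorm (c j) (hz j)).comp z (hTd j)
      have hq : HasDerivAt (fun t : ℝ => (1/2 : ℝ) * (t - a j)^2)
          (‖c j‖ - a j) ‖c j‖ := by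
        have h1 : HasDerivAt (fun t : ℝ => (t - a j)^2)
            (2 * (‖c j‖ - a j)) ‖c j‖ := by
          have := ((hasDerivAt_id (‖c j‖)).sub_const (a j)).fun_pow 2
          simpa using this
        have := h1.const_mul (1/2 : ℝ)
        refine this.congr_deriv ?_
        ring
      have := hq.comp_hasFDerivAt z hnorm
      exact this
    have hsum : HasFDerivAt
        (fun w => ∑ j, (1/2 : ℝ) * (‖F (Q w) j‖ - a j)^2)
        (∑ j, (‖c j‖ - a j) • ((‖c j‖⁻¹ • innerSL ℝ (c j)).comp (T j))) z :=
      HasFDerivAt.fun_sum (fun j _ => hsummand j)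
    -- eventual equality
    have hev : (fun w : EuclideanSpace ℂ (Fin n) =>
        (1/2 : ℝ) * ‖P w - Q w‖ ^ 2)
        =ᶠ[nhds z] (fun w => ∑ j, (1/2 : ℝ) * (‖F (Q w) j‖ - a j)^2) := by
      have hopen : ∀ᶠ w in nhds z, ∀ j, F (Q w) j ≠ 0 := by
        rw [Filter.eventually_all]
        intro j
        have hcont : Continuous (fun w => F (Q w) j) := (T j).continuous
        exact hcont.continuousAt.eventually_ne (hz j)
      filter_upwards [hopen] with w hw
      have h1 : ‖P w - Q w‖ = ‖F (P w) - F (Q w)‖ := by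
        rw [← F.map_sub, F.norm_map]
      have h2 : F (P w) = (WithLp.toLp 2 (fun j => (a j : ℂ) * (F (Q w) j / ‖F (Q w) j‖)) :
          EuclideanSpace ℂ (Fin n)) := by
        rw [hP]; exact F.apply_symm_apply _
      rw [h1, h2]
      rw [EuclideanSpace.norm_eq, Real.sq_sqrt (by positivity)]
      rw [Finset.mul_sum]
      congr 1
      funext j
      rw [PiLp.sub_apply, comp_norm_id (a j) _ (hw j)]
    refine HasFDerivAt.congr_of_eventuallyEq ?_ hev
    -- identify the derivative
    refine hsum.congr_fderiv ?_
    symm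
    ext v
    have hGdef : F (Q z - P z) = (WithLp.toLp 2 (fun j => c j - (a j : ℂ) * (c j / ‖c j‖)) :
        EuclideanSpace ℂ (Fin n)) := by
      rw [F.map_sub]
      have h2 : F (P z) = (WithLp.toLp 2 (fun j => (a j : ℂ) * (c j / ‖c j‖)) :
          EuclideanSpace ℂ (Fin n)) := by
        rw [hP]; exact F.apply_symm_apply _
      rw [h2]
      rfl
    have hinner : (inner ℂ g v : ℂ) =
        ∑ j, conj (c j - (a j : ℂ) * (c j / ‖c j‖)) * (F (Q v) j) := by
      have hadj := ContinuousLinearMap.adjoint_inner_left Q v (Q z - P z)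
      rw [hQsa] at hadj
      rw [hgdef, hadj]
      rw [← F.inner_map_map (Q z - P z) (Q v), hGdef]
      rw [PiLp.inner_apply]
      exact Finset.sum_congr rfl (fun i _ => RCLike.inner_apply' _ _)
    -- evaluate both sides
    simp only [ContinuousLinearMap.sum_apply, ContinuousLinearMap.smul_apply,
      ContinuousLinearMap.comp_apply, ContinuousLinearMap.coe_restrictScalars',
      Complex.reCLM_apply, innerSL_apply_apply]
    rw [hinner, Complex.re_sum]
    congr 1
    funext j
    have hd : T j v = F (Q v) j := hTapp j v
    rw [hd]
    have hn : (‖c j‖:ℝ) ≠ 0 := norm_ne_zero_iff.mpr (hz j)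
    have hcc : (‖c j‖:ℂ) ≠ 0 := Complex.ofReal_ne_zero.mpr hn
    have hkey : c j - (a j : ℂ) * (c j / ‖c j‖)
        = ((((‖c j‖ - a j)/‖c j‖ : ℝ)):ℂ) * c j := by
      have h2 : (‖c j‖:ℂ) * (c j / ‖c j‖) = c j := by
        rw [mul_div_assoc', mul_comm, mul_div_assoc, div_self hcc, mul_one]
      rw [Complex.ofReal_div, Complex.ofReal_sub, div_mul_eq_mul_div,
        mul_div_assoc, sub_mul, h2]
    rw [hkey]
    rw [map_mul, Complex.conj_ofReal, mul_assoc, Complex.re_ofReal_mul]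
    have : (inner ℝ (c j) (F (Q v) j) : ℝ) = (conj (c j) * F (Q v) j).re := by
      rw [Complex.inner, mul_comm]
    rw [this]
    field_simp
    simp only [smul_eq_mul]
    field_simp
  · -- the update identity
    rw [hgdef, map_sub, map_sub]
    abel
end
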